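/- arXiv:2210.10845 — 2 statements merged into one kernel-verified Lean document; each statement's English description precedes it below -/
import Mathlib

section
/- Let $u\in L^1(\Omega)$ and $f\in L^1(\partial\Omega)$ be such that the trace $Tu$ of $u$ equals $f$ $\mathcal{H}$-almost everywhere on $\partial\Omega$. Then for Lebesgue-almost every $t\in\mathbb{R}$, the trace of the superlevel set satisfies $T\chi_{\{u>t\}}=\chi_{\{f>t\}}$ $\mathcal{H}$-almost everywhere on $\partial\Omega$. -/
open MeasureTheory Filter Set Topology
open scoped ENNReal NNReal

section Prelude

variable {X : Type*} [MetricSpace X] [MeasurableSpace X]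

/-- Pointwise (upper) local Lipschitz constant of a real valued function. -/
noncomputable def lipConst (u : X → ℝ) (x : X) : ℝ≥0∞ :=
  Filter.limsup
    (fun r : ℝ => ⨆ y ∈ Metric.ball x r, ENNReal.ofReal (|u y - u x| / r))
    (nhdsWithin (0:ℝ) (Set.Ioi 0))

/-- Total variation of `u` on `U`, defined by relaxation of the integral of the local
Lipschitz constant along locally Lipschitz approximations converging in `L¹_loc(U)`
(the metric-measure-space BV energy of Miranda). -/
noncomputable def TV (μ : Measure X) (u : X → ℝ) (U : Set X) : ℝ≥0∞ :=
  ⨅ (v : ℕ → X → ℝ) (_ : (∀ n, LocallyLipschitz (v n)) ∧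
      ∀ K : Set X, K ⊆ U → IsCompact K →
        Filter.Tendsto (fun n => ∫ x in K, |v n x - u x| ∂μ) Filter.atTop (nhds (0:ℝ))),
    Filter.liminf (fun n => ∫⁻ x in U, lipConst (v n) x ∂μ) Filter.atTop

/-- Perimeter of a set `E` in `U`. -/
noncomputable def perim (μ : Measure X) (E U : Set X) : ℝ≥0∞ :=
  TV μ (E.indicator fun _ => (1:ℝ)) U

/-- `u` has trace `t` at the boundary point `z` of `Ω`. -/
def HasTraceAt (μ : Measure X) (Ω : Set X) (u : X → ℝ) (z : X) (t : ℝ) : Prop :=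
  Filter.Tendsto (fun r : ℝ => ⨍ y in Metric.ball z r ∩ Ω, |u y - t| ∂μ)
    (nhdsWithin (0:ℝ) (Set.Ioi 0)) (nhds (0:ℝ))

/-- Codimension-one Hausdorff premeasure at scale `δ` (covers by balls of radius `< δ`). -/
noncomputable def codimOneContent (μ : Measure X) (δ : ℝ) (E : Set X) : ℝ≥0∞ :=
  ⨅ (c : ℕ → X × ℝ) (_ : (∀ i, 0 < (c i).2 ∧ (c i).2 < δ) ∧
      E ⊆ ⋃ i, Metric.ball (c i).1 (c i).2),
    ∑' i, μ (Metric.ball (c i).1 (c i).2) / ENNReal.ofReal (c i).2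

/-- Codimension-one Hausdorff measure (as a set function). -/
noncomputable def codimOneHausdorff (μ : Measure X) (E : Set X) : ℝ≥0∞ :=
  ⨆ (δ : ℝ) (_ : (0:ℝ) < δ), codimOneContent μ δ E

/-- `μ` is a (globally) doubling measure: `0 < μ(B(x,2r)) ≤ C μ(B(x,r)) < ∞`. -/
def IsDoubling (μ : Measure X) : Prop :=
  ∃ C : ℝ≥0∞, 1 ≤ C ∧ ∀ (x : X) (r : ℝ), 0 < r →
    0 < μ (Metric.ball x (2*r)) ∧ μ (Metric.ball x (2*r)) ≤ C * μ (Metric.ball x r) ∧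
      C * μ (Metric.ball x r) < ⊤

/-- `H|∂Ω` is lower codimension-1 Ahlfors regular. -/
def LowerCodimOneAR (μ H : Measure X) (Ω : Set X) : Prop :=
  ∃ C : ℝ≥0∞, 0 < C ∧ ∀ x ∈ frontier Ω, ∀ r : ℝ, 0 < r →
    r < 2 * Metric.diam (frontier Ω) →
    C * (μ (Metric.ball x r) / ENNReal.ofReal r) ≤ H (Metric.ball x r ∩ frontier Ω)

/-- `H|∂Ω` is doubling. -/
def BoundaryDoubling (H : Measure X) (Ω : Set X) : Prop :=
  ∃ C : ℝ≥0∞, 1 ≤ C ∧ ∀ x ∈ frontier Ω, ∀ r : ℝ, 0 < r →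
    H (Metric.ball x (2*r) ∩ frontier Ω) ≤ C * H (Metric.ball x r ∩ frontier Ω)

/-- `Ω` is an `A`-uniform domain. -/
def IsUniformDomain (Ω : Set X) (A : ℝ) : Prop :=
  1 ≤ A ∧ ∀ x ∈ Ω, ∀ y ∈ Ω, ∃ γ : ℝ → X, ContinuousOn γ (Set.Icc 0 1) ∧
    γ 0 = x ∧ γ 1 = y ∧ (∀ t ∈ Set.Icc (0:ℝ) 1, γ t ∈ Ω) ∧
    eVariationOn γ (Set.Icc 0 1) ≤ ENNReal.ofReal (A * dist x y) ∧
    ∀ t ∈ Set.Icc (0:ℝ) 1,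
      min (eVariationOn γ (Set.Icc 0 t)) (eVariationOn γ (Set.Icc t 1)) ≤
        ENNReal.ofReal (A * Metric.infDist (γ t) Ωᶜ)

/-- `E` is a weak solution set to the Dirichlet problem in `Ω` with boundary data `χ_F`. -/
def IsWeakSolSet (μ : Measure X) (Ω F E : Set X) : Prop :=
  (∀ x, x ∉ Ω → (x ∈ E ↔ x ∈ F)) ∧
  ∀ E' : Set X, (∀ x, x ∉ Ω → (x ∈ E' ↔ x ∈ F)) →
    perim μ E (closure Ω) ≤ perim μ E' (closure Ω)

/-- Minimal weak solution set for boundary data `χ_F`. -/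
def IsMinimalWeakSolSet (μ : Measure X) (Ω F E : Set X) : Prop :=
  IsWeakSolSet μ Ω F E ∧ ∀ E', IsWeakSolSet μ Ω F E' → μ (E \ E') = 0

/-- `∂Ω` has positive mean curvature (Lahti–Malý–Shanmugalingam–Speight). -/
def PosMeanCurvature (μ : Measure X) (Ω : Set X) : Prop :=
  ∀ x ∈ frontier Ω, ∃ (φ : ℝ → ℝ) (rx : ℝ), 0 < rx ∧
    (∀ r, 0 < r → 0 < φ r) ∧ (∀ r s, 0 < r → r ≤ s → φ r ≤ φ s) ∧
    ∀ r : ℝ, 0 < r → r < rx → perim μ (Metric.ball x r) Set.univ < ⊤ →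
      ∀ E : Set X, IsMinimalWeakSolSet μ Ω (Metric.ball x r) E →
        μ (Metric.ball x (φ r) \ E) = 0

/-- Membership in the class `𝒦_{ψ₁,ψ₂,f,g}(Ω)`. -/
def memK (μ H : Measure X) (Ω : Set X) (ψ₁ ψ₂ : X → EReal) (f g : X → ℝ)
    (u : X → ℝ) : Prop :=
  MeasureTheory.IntegrableOn u Ω μ ∧ TV μ u Ω < ⊤ ∧
  (∀ᵐ x ∂μ.restrict Ω, ψ₁ x ≤ (u x : EReal) ∧ (u x : EReal) ≤ ψ₂ x) ∧
  (∀ᵐ z ∂H.restrict (frontier Ω), ∃ t : ℝ, HasTraceAt μ Ω u z t ∧ f z ≤ t ∧ t ≤ g z)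

/-- Strong solution to the `𝒦_{ψ₁,ψ₂,f,g}`-obstacle problem. -/
def IsStrongSolution (μ H : Measure X) (Ω : Set X) (ψ₁ ψ₂ : X → EReal) (f g : X → ℝ)
    (u : X → ℝ) : Prop :=
  memK μ H Ω ψ₁ ψ₂ f g u ∧ ∀ v, memK μ H Ω ψ₁ ψ₂ f g v → TV μ u Ω ≤ TV μ v Ω

/-- Minimal strong solution to the `𝒦_{ψ₁,ψ₂,f,g}`-obstacle problem. -/
def IsMinimalStrongSolution (μ H : Measure X) (Ω : Set X) (ψ₁ ψ₂ : X → EReal)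
    (f g : X → ℝ) (u : X → ℝ) : Prop :=
  IsStrongSolution μ H Ω ψ₁ ψ₂ f g u ∧
  ∀ v, IsStrongSolution μ H Ω ψ₁ ψ₂ f g v → ∀ᵐ x ∂μ.restrict Ω, u x ≤ v x

/-- Maximal strong solution to the `𝒦_{ψ₁,ψ₂,f,g}`-obstacle problem. -/
def IsMaximalStrongSolution (μ H : Measure X) (Ω : Set X) (ψ₁ ψ₂ : X → EReal)
    (f g : X → ℝ) (u : X → ℝ) : Prop :=
  IsStrongSolution μ H Ω ψ₁ ψ₂ f g u ∧
  ∀ v, IsStrongSolution μ H Ω ψ₁ ψ₂ f g v → ∀ᵐ x ∂μ.restrict Ω, v x ≤ u x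

/-- Characteristic function of a set, viewed as an `EReal`-valued obstacle. -/
noncomputable def setObstacle (A : Set X) : X → EReal :=
  fun x => ((A.indicator (fun _ => (1:ℝ)) x : ℝ) : EReal)

/-- Membership in the class `𝒦_{A,B,F,G}(Ω)` (characteristic-function data). -/
def memKSet (μ H : Measure X) (Ω A B F G : Set X) (u : X → ℝ) : Prop :=
  memK μ H Ω (setObstacle A) (setObstacle B)
    (F.indicator fun _ => (1:ℝ)) (G.indicator fun _ => (1:ℝ)) u

/-- `E` is a strong solution set to the `𝒦_{A,B,F,G}`-obstacle problem. -/
def IsStrongSolutionSet (μ H : Measure X) (Ω A B F G : Set X) (E : Set X) : Prop :=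
  memKSet μ H Ω A B F G (E.indicator fun _ => (1:ℝ)) ∧
  ∀ v, memKSet μ H Ω A B F G v →
    TV μ (E.indicator fun _ => (1:ℝ)) Ω ≤ TV μ v Ω

/-- `E` is the minimal strong solution set to the `𝒦_{A,B,F,G}`-obstacle problem. -/
def IsMinimalStrongSolutionSet (μ H : Measure X) (Ω A B F G : Set X) (E : Set X) : Prop :=
  IsStrongSolutionSet μ H Ω A B F G E ∧
  ∀ E', IsStrongSolutionSet μ H Ω A B F G E' → μ (E \ E') = 0

/-- Membership in `𝒦̃_{A,B,F,G}(Ω)`: pointwise everywhere obstacle and boundary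
constraints, for characteristic-function data. -/
def memKt (Ω A B F G : Set X) (u : X → ℝ) : Prop :=
  (∀ x ∈ Ω, A.indicator (fun _ => (1:ℝ)) x ≤ u x ∧ u x ≤ B.indicator (fun _ => (1:ℝ)) x) ∧
  (∀ x ∉ Ω, F.indicator (fun _ => (1:ℝ)) x ≤ u x ∧ u x ≤ G.indicator (fun _ => (1:ℝ)) x)

/-- `u` is an `ε`-weak solution to the `𝒦_{A,B,F,G}`-obstacle problem. -/
def IsEpsWeakSolution (μ : Measure X) (Ω A B F G : Set X) (ε : ℝ) (u : X → ℝ) : Prop :=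
  memKt Ω A B F G u ∧ MeasureTheory.LocallyIntegrable u μ ∧
  ∀ v, memKt Ω A B F G v → MeasureTheory.LocallyIntegrable v μ →
    TV μ u (Metric.thickening ε Ω) ≤ TV μ v (Metric.thickening ε Ω)

/-- Membership in the Dirichlet class with boundary data `h`. -/
def memD (μ H : Measure X) (Ω : Set X) (h : X → ℝ) (u : X → ℝ) : Prop :=
  MeasureTheory.IntegrableOn u Ω μ ∧ TV μ u Ω < ⊤ ∧
  ∀ᵐ z ∂H.restrict (frontier Ω), HasTraceAt μ Ω u z (h z)

/-- Strong solution to the Dirichlet problem for least gradients with data `h`. -/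
def IsDirichletStrongSolution (μ H : Measure X) (Ω : Set X) (h : X → ℝ)
    (u : X → ℝ) : Prop :=
  memD μ H Ω h u ∧ ∀ v, memD μ H Ω h v → TV μ u Ω ≤ TV μ v Ω

end Prelude

/-!
The trace is an `L¹`-type limit, and `|χ_{(t,∞)}(a) - χ_{(t,∞)}(c)| ≤ |a - c| / |c - t|` for
`c ≠ t`, so at every boundary point where `Tu = f ≠ t` the superlevel indicator has trace
`χ_{(t,∞)}(f)`. Since `f` is integrable on `∂Ω`, its level sets of positive measure are
countable, hence for a.e. `t` the level `{f = t}` is `ℋ`-null.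
-/

namespace MeasureTheory

theorem Integrable.ae_forall_ae_ne {α : Type*} {_ : MeasurableSpace α} {ν : Measure α}
    {f : α → ℝ} (hf : Integrable f ν) (m : Measure ℝ) [NullSingletonClass m] :
    ∀ᵐ t ∂m, ∀ᵐ x ∂ν, f x ≠ t := by
  have hfin := hf.aefinStronglyMeasurable
  -- Off this σ-finite set `f` vanishes a.e., so only the level `0` can be charged there.
  set s := hfin.sigmaFiniteSet
  have hcount : {t : ℝ | 0 < ν.restrict s {x | f x = t}}.Countable :=
    Measure.countable_meas_level_set_pos₀ hf.aemeasurable.restrict.nullMeasurable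
  filter_upwards [(hcount.insert 0).ae_notMem m] with t ht
  simp only [mem_insert_iff, mem_ofPred_eq, not_or, not_lt, nonpos_iff_eq_zero] at ht
  rw [← Measure.restrict_add_restrict_compl (μ := ν) hfin.measurableSet, ae_add_measure_iff]
  refine ⟨measure_eq_zero_iff_ae_notMem.mp ht.2, ?_⟩
  filter_upwards [hfin.ae_eq_zero_compl] with x hx
  simpa [hx] using Ne.symm ht.1

theorem setAverage_abs_sub_le_mul {α : Type*} {_ : MeasurableSpace α} {μ : Measure α}
    {s : Set α} {u v : α → ℝ} {c c' K : ℝ} (hu : IntegrableOn u s μ)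
    (hbound : ∀ y, |v y - c'| ≤ K * |u y - c|) :
    ⨍ y in s, |v y - c'| ∂μ ≤ K * ⨍ y in s, |u y - c| ∂μ := by
  rw [setAverage_eq, setAverage_eq, smul_eq_mul, smul_eq_mul, mul_left_comm]
  rcases eq_top_or_lt_top (μ s) with hs | hs
  -- `μ.real s = 0` when `μ s = ∞`, making both averages vanish.
  · simp [Measure.real, hs]
  gcongr
  rw [← integral_const_mul]
  exact integral_mono_of_nonneg (.of_forall fun _ => abs_nonneg _)
    (((hu.sub (integrableOn_const hs.ne)).abs).const_mul K) (.of_forall hbound)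

end MeasureTheory

theorem abs_indicator_Ioi_sub_le {a c t : ℝ} (hct : c ≠ t) :
    |(Ioi t).indicator (fun _ => (1:ℝ)) a - (Ioi t).indicator (fun _ => (1:ℝ)) c| ≤
      |c - t|⁻¹ * |a - c| := by
  have hpos : 0 < |c - t| := abs_pos.mpr (sub_ne_zero.mpr hct)
  by_cases ha : t < a <;> by_cases hc : t < c <;>
    simp only [indicator, mem_Ioi, ha, hc, if_true, if_false, sub_self, sub_zero, zero_sub,
      abs_neg, abs_one, abs_zero] <;>
    first
    | positivity
    | rw [le_inv_mul_iff₀ hpos, mul_one]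
      -- `t` separates `a` from `c`
      cases abs_cases (c - t) <;> cases abs_cases (a - c) <;> linarith

section HasTraceAt

variable {X : Type*} [MetricSpace X] [MeasurableSpace X] {μ : Measure X} {Ω : Set X}
  {u v : X → ℝ} {z : X} {c : ℝ}

theorem HasTraceAt.of_abs_sub_le_mul (hu : IntegrableOn u Ω μ) (htr : HasTraceAt μ Ω u z c)
    {c' K : ℝ} (hbound : ∀ y, |v y - c'| ≤ K * |u y - c|) :
    HasTraceAt μ Ω v z c' := by
  refine squeeze_zero (fun r => ?_)
    (fun r => setAverage_abs_sub_le_mul (hu.mono_set inter_subset_right) hbound)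
    (by simpa using htr.const_mul K)
  rw [setAverage_eq, smul_eq_mul]
  exact mul_nonneg (inv_nonneg.2 measureReal_nonneg) (integral_nonneg fun _ => abs_nonneg _)

theorem HasTraceAt.indicator_setOf_lt (hu : IntegrableOn u Ω μ) (htr : HasTraceAt μ Ω u z c)
    {t : ℝ} (hct : c ≠ t) :
    HasTraceAt μ Ω ({y | t < u y}.indicator fun _ => (1:ℝ)) z
      ((Ioi t).indicator (fun _ => (1:ℝ)) c) :=
  htr.of_abs_sub_le_mul hu fun _ => abs_indicator_Ioi_sub_le hct

end HasTraceAt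

theorem trace_of_superlevel_sets_general {X : Type*} [MetricSpace X] [MeasurableSpace X]
    (μ H : Measure X)
    (Ω : Set X)
    (u f : X → ℝ)
    (hu : MeasureTheory.IntegrableOn u Ω μ)
    (hf : MeasureTheory.IntegrableOn f (frontier Ω) H)
    (htr : ∀ᵐ z ∂H.restrict (frontier Ω), HasTraceAt μ Ω u z (f z)) :
    ∀ᵐ t : ℝ ∂(volume : Measure ℝ),
      ∀ᵐ z ∂H.restrict (frontier Ω),
        HasTraceAt μ Ω ({y : X | t < u y}.indicator fun _ => (1:ℝ)) z
          ({y : X | t < f y}.indicator (fun _ => (1:ℝ)) z) := by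
  filter_upwards [hf.ae_forall_ae_ne volume] with t hft
  filter_upwards [htr, hft] with z hz hzt
  exact hz.indicator_setOf_lt hu hzt

/-- if `Tu = f` `ℋ`-a.e. on `∂Ω`, then for a.e. `t ∈ ℝ` the trace of the
superlevel set satisfies `Tχ_{u>t} = χ_{f>t}` `ℋ`-a.e. on `∂Ω`. -/
theorem trace_of_superlevel_sets {X : Type*} [MetricSpace X] [MeasurableSpace X]
    [BorelSpace X] [CompleteSpace X] (μ H : Measure X)
    (hμ : IsDoubling μ)
    (hH : ∀ s : Set X, H s = codimOneHausdorff μ s)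
    (Ω : Set X) (hΩo : IsOpen Ω) (hΩc : IsConnected Ω) (hΩb : Bornology.IsBounded Ω)
    (u f : X → ℝ)
    (hu : MeasureTheory.IntegrableOn u Ω μ)
    (hf : MeasureTheory.IntegrableOn f (frontier Ω) H)
    (htr : ∀ᵐ z ∂H.restrict (frontier Ω), HasTraceAt μ Ω u z (f z)) :
    ∀ᵐ t : ℝ ∂(volume : Measure ℝ),
      ∀ᵐ z ∂H.restrict (frontier Ω),
        HasTraceAt μ Ω ({y : X | t < u y}.indicator fun _ => (1:ℝ)) z
          ({y : X | t < f y}.indicator (fun _ => (1:ℝ)) z) :=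
  trace_of_superlevel_sets_general μ H Ω u f hu hf htr
end

section
/- Under the standing assumptions, if $s,t$ are admissible levels with $s<t$ and $E_s$, $E_t$ are the minimal strong solution sets to the $\mathcal{K}_{A_s,B_s,F_s,G_s}$- and $\mathcal{K}_{A_t,B_t,F_t,G_t}$-obstacle problems respectively (where $A_t\subset A_s$, $B_t\subset B_s$, $F_t\subset F_s$, $G_t\subset G_s$ are superlevel sets), then $\mu(E_t\setminus E_s)=0$, i.e., the family $\{E_t\}$ is nested decreasing in $t$ up to $\mu$-null sets. -/
open MeasureTheory Filter Set Topology
open scoped ENNReal NNReal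

/-!
The set `Es ∩ Et` solves the problem at level `t`. Indeed `χ_{Es ∪ Et}` is admissible at level `s`
(the data decrease in the level), so `P(Es) ≤ P(Es ∪ Et)`, and submodularity of the perimeter,
`P(Es ∩ Et) + P(Es ∪ Et) ≤ P(Es) + P(Et)`, yields `P(Es ∩ Et) ≤ P(Et)`; moreover `χ_{Es ∩ Et}` is
admissible at level `t`. Minimality of `Et` then gives `μ(Et \ (Es ∩ Et)) = 0`.

Submodularity comes from the relaxation defining `TV`: the pointwise minimum and maximum of two
continuous functions `a`, `b` have, off the set `{a = b}`, local Lipschitz constants adding up to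
those of `a` and `b`, and that set can be made null by shifting `b` by arbitrarily small constants.
-/

section LipConst

variable {X : Type*} [MetricSpace X]

lemma lipConst_congr_of_eventuallyEq {f g : X → ℝ} {x : X} (h : f =ᶠ[𝓝 x] g) :
    lipConst f x = lipConst g x := by
  obtain ⟨ρ, hρ, hfg⟩ := Metric.eventually_nhds_iff.1 h
  have hx : f x = g x := hfg (Metric.mem_ball_self hρ)
  refine limsup_congr ?_
  filter_upwards [Ioo_mem_nhdsGT hρ] with r hr
  refine biSup_congr fun y hy => ?_
  rw [hfg (lt_trans hy hr.2), hx]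

lemma lipConst_add_const (f : X → ℝ) (c : ℝ) (x : X) :
    lipConst (fun y => f y + c) x = lipConst f x := by
  simp only [lipConst, add_sub_add_right_eq_sub]

lemma lipConst_min_of_lt {a b : X → ℝ} (ha : Continuous a) (hb : Continuous b) {x : X}
    (h : a x < b x) : lipConst (fun y => min (a y) (b y)) x = lipConst a x :=
  lipConst_congr_of_eventuallyEq <| (ha.continuousAt.eventually_lt hb.continuousAt h).mono
    fun _ hy => min_eq_left hy.le

lemma lipConst_max_of_lt {a b : X → ℝ} (ha : Continuous a) (hb : Continuous b) {x : X}
    (h : a x < b x) : lipConst (fun y => max (a y) (b y)) x = lipConst b x :=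
  lipConst_congr_of_eventuallyEq <| (ha.continuousAt.eventually_lt hb.continuousAt h).mono
    fun _ hy => max_eq_right hy.le

variable [MeasurableSpace X] [OpensMeasurableSpace X]

/-- The sets `{a < b}` and `{b < a}` are treated separately because `lipConst` need not be
measurable, so the lower integral is only additive in the measure, not in the integrand. -/
lemma lintegral_lipConst_min_add_lintegral_lipConst_max (μ : Measure X) {U : Set X}
    (hU : MeasurableSet U) {a b : X → ℝ} (ha : Continuous a) (hb : Continuous b)
    (hab : μ (U ∩ {x | a x = b x}) = 0) :
    (∫⁻ x in U, lipConst (fun y => min (a y) (b y)) x ∂μ) +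
        ∫⁻ x in U, lipConst (fun y => max (a y) (b y)) x ∂μ =
      (∫⁻ x in U, lipConst a x ∂μ) + ∫⁻ x in U, lipConst b x ∂μ := by
  set S := U ∩ {x | a x < b x}
  set T := U ∩ {x | b x < a x}
  have hS : MeasurableSet S := hU.inter (measurableSet_lt ha.measurable hb.measurable)
  have hT : MeasurableSet T := hU.inter (measurableSet_lt hb.measurable ha.measurable)
  have hUST : μ.restrict U = μ.restrict S + μ.restrict T := by
    have hdisj : Disjoint S T :=
      Set.disjoint_left.2 fun x hxS hxT => lt_asymm (show a x < b x from hxS.2) hxT.2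
    rw [← Measure.restrict_union hdisj hT]
    refine Measure.restrict_congr_set (ae_eq_set.2 ⟨measure_mono_null ?_ hab, ?_⟩)
    · rintro x ⟨hxU, hx⟩
      simp only [S, T, mem_union, mem_inter_iff, hxU, true_and, not_or] at hx
      exact ⟨hxU, le_antisymm (not_lt.1 hx.2) (not_lt.1 hx.1)⟩
    · rw [sdiff_eq_empty.2 (union_subset inter_subset_left inter_subset_left), measure_empty]
  have hminS : ∫⁻ x in S, lipConst (fun y => min (a y) (b y)) x ∂μ =
      ∫⁻ x in S, lipConst a x ∂μ :=
    setLIntegral_congr_fun hS fun x hx => lipConst_min_of_lt ha hb hx.2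
  have hminT : ∫⁻ x in T, lipConst (fun y => min (a y) (b y)) x ∂μ =
      ∫⁻ x in T, lipConst b x ∂μ :=
    setLIntegral_congr_fun hT fun x hx => by
      simpa only [min_comm] using lipConst_min_of_lt hb ha hx.2
  have hmaxS : ∫⁻ x in S, lipConst (fun y => max (a y) (b y)) x ∂μ =
      ∫⁻ x in S, lipConst b x ∂μ :=
    setLIntegral_congr_fun hS fun x hx => lipConst_max_of_lt ha hb hx.2
  have hmaxT : ∫⁻ x in T, lipConst (fun y => max (a y) (b y)) x ∂μ =
      ∫⁻ x in T, lipConst a x ∂μ :=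
    setLIntegral_congr_fun hT fun x hx => by
      simpa only [max_comm] using lipConst_max_of_lt hb ha hx.2
  simp only [hUST, lintegral_add_measure, hminS, hminT, hmaxS, hmaxT]
  ring

end LipConst

theorem ENNReal.le_liminf_add {f g : ℕ → ℝ≥0∞} :
    liminf f atTop + liminf g atTop ≤ liminf (f + g) atTop := by
  simp only [liminf_eq_iSup_iInf_of_nat]
  exact ENNReal.iSup_add_iSup_le fun i j => le_iSup_of_le (max i j) <| le_iInf₂ fun k hk =>
    add_le_add (iInf₂_le k (le_of_max_le_left hk)) (iInf₂_le k (le_of_max_le_right hk))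

lemma exists_mem_Ioo_measure_setOf_eq_eq_zero {α : Type*} [MeasurableSpace α] (μ : Measure α)
    [SFinite μ] {g : α → ℝ} (hg : Measurable g) {ε : ℝ} (hε : 0 < ε) :
    ∃ δ ∈ Ioo 0 ε, μ {x | g x = δ} = 0 := by
  by_contra! h
  have hcount : (Ioo 0 ε).Countable :=
    (Measure.countable_meas_level_set_pos hg).mono fun δ hδ => pos_iff_ne_zero.2 (h δ hδ)
  have := hcount.measure_zero volume
  rw [Real.volume_Ioo, ENNReal.ofReal_eq_zero] at this
  linarith

section TotalVariation

variable {X : Type*} [MetricSpace X] [MeasurableSpace X] {μ : Measure X} {U : Set X}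

/-- The `L¹_loc(U)` convergence of the approximating sequences in the definition of `TV`. -/
def TendstoLocL1 (μ : Measure X) (U : Set X) (w : ℕ → X → ℝ) (u : X → ℝ) : Prop :=
  ∀ K ⊆ U, IsCompact K → Tendsto (fun n => ∫ x in K, |w n x - u x| ∂μ) atTop (𝓝 0)

lemma TV_le_liminf {u : X → ℝ} {w : ℕ → X → ℝ} (hw : ∀ n, LocallyLipschitz (w n))
    (hwu : TendstoLocL1 μ U w u) :
    TV μ u U ≤ liminf (fun n => ∫⁻ x in U, lipConst (w n) x ∂μ) atTop :=
  iInf₂_le w ⟨hw, hwu⟩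

lemma exists_tendstoLocL1_forall_lintegral_lt {u : X → ℝ} {c : ℝ≥0∞} (h : TV μ u U < c) :
    ∃ w : ℕ → X → ℝ, (∀ n, LocallyLipschitz (w n)) ∧ TendstoLocL1 μ U w u ∧
      ∀ n, ∫⁻ x in U, lipConst (w n) x ∂μ < c := by
  obtain ⟨w, hw⟩ := iInf_lt_iff.1 h
  obtain ⟨⟨hlip, hwu⟩, hlt⟩ := iInf_lt_iff.1 hw
  obtain ⟨φ, hφ, hφlt⟩ :=
    extraction_of_frequently_atTop (frequently_lt_of_liminf_lt (by isBoundedDefault) hlt)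
  exact ⟨fun n => w (φ n), fun n => hlip (φ n),
    fun K hKU hK => (hwu K hKU hK).comp hφ.tendsto_atTop, hφlt⟩

lemma tendstoLocL1_const {δ : ℕ → ℝ} {c : ℝ} (hδ : Tendsto δ atTop (𝓝 c)) :
    TendstoLocL1 μ U (fun n _ => δ n) (fun _ => c) := by
  intro K hKU _
  simp only [setIntegral_const, smul_eq_mul]
  simpa using (hδ.sub_const c).abs.const_mul (μ.real K)

variable [OpensMeasurableSpace X]

lemma integrableOn_abs_sub_of_continuous {f u : X → ℝ} (hf : Continuous f)
    (hu : IntegrableOn u U μ) (hUfin : μ U ≠ ⊤) {K : Set X} (hKU : K ⊆ U) (hK : IsCompact K) :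
    IntegrableOn (fun x => |f x - u x|) K μ :=
  ((hf.continuousOn.integrableOn_of_subset_isCompact hK hK.measurableSet subset_rfl
    (measure_ne_top_of_subset hKU hUfin)).sub (hu.mono_set hKU)).abs

lemma TendstoLocL1.of_abs_sub_le_add (hUfin : μ U ≠ ⊤) {a b w : ℕ → X → ℝ} {u v g : X → ℝ}
    (ha : ∀ n, Continuous (a n)) (hb : ∀ n, Continuous (b n))
    (hu : IntegrableOn u U μ) (hv : IntegrableOn v U μ)
    (hau : TendstoLocL1 μ U a u) (hbv : TendstoLocL1 μ U b v)
    (hle : ∀ n x, |w n x - g x| ≤ |a n x - u x| + |b n x - v x|) :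
    TendstoLocL1 μ U w g := by
  intro K hKU hK
  have hau' := fun n => integrableOn_abs_sub_of_continuous (ha n) hu hUfin hKU hK
  have hbv' := fun n => integrableOn_abs_sub_of_continuous (hb n) hv hUfin hKU hK
  refine squeeze_zero (fun n => integral_nonneg fun x => abs_nonneg _) (fun n => ?_)
    (by simpa using (hau K hKU hK).add (hbv K hKU hK))
  exact (integral_mono_of_nonneg (ae_of_all _ fun x => abs_nonneg _) ((hau' n).add (hbv' n))
    (ae_of_all _ (hle n))).trans_eq (integral_add (hau' n) (hbv' n))

lemma TendstoLocL1.add_const (hUfin : μ U ≠ ⊤) {a : ℕ → X → ℝ} {u : X → ℝ} {δ : ℕ → ℝ}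
    (ha : ∀ n, Continuous (a n)) (hu : IntegrableOn u U μ) (hau : TendstoLocL1 μ U a u)
    (hδ : Tendsto δ atTop (𝓝 0)) :
    TendstoLocL1 μ U (fun n x => a n x + δ n) u :=
  hau.of_abs_sub_le_add hUfin ha (fun _ => continuous_const) hu integrableOn_zero
    (tendstoLocL1_const hδ) fun n x => by
      rw [sub_zero, add_sub_right_comm]
      exact abs_add_le _ _

lemma TendstoLocL1.min (hUfin : μ U ≠ ⊤) {a b : ℕ → X → ℝ} {u v : X → ℝ}
    (ha : ∀ n, Continuous (a n)) (hb : ∀ n, Continuous (b n))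
    (hu : IntegrableOn u U μ) (hv : IntegrableOn v U μ)
    (hau : TendstoLocL1 μ U a u) (hbv : TendstoLocL1 μ U b v) :
    TendstoLocL1 μ U (fun n x => min (a n x) (b n x)) (fun x => min (u x) (v x)) :=
  hau.of_abs_sub_le_add hUfin ha hb hu hv hbv fun _ _ =>
    (abs_min_sub_min_le_max _ _ _ _).trans (max_le_add_of_nonneg (abs_nonneg _) (abs_nonneg _))

lemma TendstoLocL1.max (hUfin : μ U ≠ ⊤) {a b : ℕ → X → ℝ} {u v : X → ℝ}
    (ha : ∀ n, Continuous (a n)) (hb : ∀ n, Continuous (b n))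
    (hu : IntegrableOn u U μ) (hv : IntegrableOn v U μ)
    (hau : TendstoLocL1 μ U a u) (hbv : TendstoLocL1 μ U b v) :
    TendstoLocL1 μ U (fun n x => max (a n x) (b n x)) (fun x => max (u x) (v x)) :=
  hau.of_abs_sub_le_add hUfin ha hb hu hv hbv fun _ _ =>
    (abs_max_sub_max_le_max _ _ _ _).trans (max_le_add_of_nonneg (abs_nonneg _) (abs_nonneg _))

theorem TV_min_add_TV_max_le (hU : MeasurableSet U) (hUfin : μ U ≠ ⊤) {u v : X → ℝ}
    (hu : IntegrableOn u U μ) (hv : IntegrableOn v U μ) :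
    TV μ (fun x => min (u x) (v x)) U + TV μ (fun x => max (u x) (v x)) U ≤
      TV μ u U + TV μ v U := by
  refine ENNReal.le_of_forall_pos_le_add fun ε hε hfin => ?_
  have hε2 : (ε / 2 : ℝ≥0∞) ≠ 0 := (ENNReal.half_pos (by exact_mod_cast hε.ne')).ne'
  obtain ⟨a, ha, hau, haE⟩ := exists_tendstoLocL1_forall_lintegral_lt
    (ENNReal.lt_add_right (ENNReal.add_lt_top.1 hfin).1.ne hε2)
  obtain ⟨b, hb, hbv, hbE⟩ := exists_tendstoLocL1_forall_lintegral_lt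
    (ENNReal.lt_add_right (ENNReal.add_lt_top.1 hfin).2.ne hε2)
  have hac : ∀ n, Continuous (a n) := fun n => (ha n).continuous
  have : IsFiniteMeasure (μ.restrict U) := isFiniteMeasure_restrict.2 hUfin
  choose δ hδ hδnull using fun n : ℕ => exists_mem_Ioo_measure_setOf_eq_eq_zero (μ.restrict U)
    ((hac n).measurable.sub (hb n).continuous.measurable) (Nat.one_div_pos_of_nat (n := n))
  have hδ0 : Tendsto δ atTop (𝓝 0) := squeeze_zero (fun n => (hδ n).1.le) (fun n => (hδ n).2.le)
    tendsto_one_div_add_atTop_nhds_zero_nat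
  set b' : ℕ → X → ℝ := fun n x => b n x + δ n
  have hb' : ∀ n, LocallyLipschitz (b' n) := fun n => (hb n).add (LocallyLipschitz.const _)
  have hb'v : TendstoLocL1 μ U b' v := hbv.add_const hUfin (fun n => (hb n).continuous) hv hδ0
  have hnull : ∀ n, μ (U ∩ {x | a n x = b' n x}) = 0 := fun n => by
    rw [← hδnull n, Measure.restrict_apply' hU, inter_comm]
    congr 2 with x
    simp only [b', mem_ofPred_eq, Pi.sub_apply, sub_eq_iff_eq_add']
  have hE : ∀ n, (∫⁻ x in U, lipConst (fun y => min (a n y) (b' n y)) x ∂μ) +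
      ∫⁻ x in U, lipConst (fun y => max (a n y) (b' n y)) x ∂μ ≤
        TV μ u U + ε / 2 + (TV μ v U + ε / 2) := fun n => by
    rw [lintegral_lipConst_min_add_lintegral_lipConst_max μ hU (hac n) (hb' n).continuous
      (hnull n)]
    simp only [b', lipConst_add_const]
    exact add_le_add (haE n).le (hbE n).le
  have hbc : ∀ n, Continuous (b' n) := fun n => (hb' n).continuous
  calc TV μ (fun x => min (u x) (v x)) U + TV μ (fun x => max (u x) (v x)) U
      ≤ liminf (fun n => ∫⁻ x in U, lipConst (fun y => min (a n y) (b' n y)) x ∂μ) atTop +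
          liminf (fun n => ∫⁻ x in U, lipConst (fun y => max (a n y) (b' n y)) x ∂μ) atTop :=
        add_le_add (TV_le_liminf (fun n => (ha n).min (hb' n)) (hau.min hUfin hac hbc hu hv hb'v))
          (TV_le_liminf (fun n => (ha n).max (hb' n)) (hau.max hUfin hac hbc hu hv hb'v))
    _ ≤ TV μ u U + ε / 2 + (TV μ v U + ε / 2) :=
        ENNReal.le_liminf_add.trans (liminf_le_of_frequently_le' (Frequently.of_forall hE))
    _ = TV μ u U + TV μ v U + ε := by rw [add_add_add_comm, ENNReal.add_halves]

end TotalVariation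

lemma setObstacle_mono {X : Type*} {A B : Set X} (h : A ⊆ B) : setObstacle A ≤ setObstacle B :=
  fun x => EReal.coe_le_coe_iff.2 (indicator_le_indicator_of_subset h (fun _ => zero_le_one) x)

lemma indicator_one_inter {α : Type*} (s t : Set α) :
    (s ∩ t).indicator (fun _ => (1 : ℝ)) =
      fun x => min (s.indicator (fun _ => 1) x) (t.indicator (fun _ => 1) x) := by
  ext x
  by_cases hs : x ∈ s <;> by_cases ht : x ∈ t <;> simp [hs, ht]

section ObstacleProblem

variable {X : Type*} [MetricSpace X] [MeasurableSpace X] {μ H : Measure X} {Ω : Set X}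

lemma HasTraceAt.of_abs_sub_le (hΩ : μ Ω ≠ ⊤) {u v w : X → ℝ} {z : X} {τu τv τ : ℝ}
    (hu : IntegrableOn u Ω μ) (hv : IntegrableOn v Ω μ)
    (hle : ∀ x, |w x - τ| ≤ |u x - τu| + |v x - τv|)
    (htu : HasTraceAt μ Ω u z τu) (htv : HasTraceAt μ Ω v z τv) :
    HasTraceAt μ Ω w z τ := by
  refine squeeze_zero (fun r => ?_) (fun r => ?_) (by simpa using htu.add htv)
  · rw [setAverage_eq, smul_eq_mul]
    exact mul_nonneg (by positivity) (integral_nonneg fun y => abs_nonneg _)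
  · set S := Metric.ball z r ∩ Ω
    have hS : μ S ≠ ⊤ := measure_ne_top_of_subset inter_subset_right hΩ
    have hIu : IntegrableOn (fun y => |u y - τu|) S μ :=
      ((hu.mono_set inter_subset_right).sub (integrableOn_const hS)).abs
    have hIv : IntegrableOn (fun y => |v y - τv|) S μ :=
      ((hv.mono_set inter_subset_right).sub (integrableOn_const hS)).abs
    simp only [setAverage_eq, smul_eq_mul, ← mul_add, ← integral_add hIu hIv]
    exact mul_le_mul_of_nonneg_left (integral_mono_of_nonneg
      (ae_of_all _ fun y => abs_nonneg _) (hIu.add hIv) (ae_of_all _ hle)) (by positivity)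

lemma HasTraceAt.min (hΩ : μ Ω ≠ ⊤) {u v : X → ℝ} {z : X} {τu τv : ℝ}
    (hu : IntegrableOn u Ω μ) (hv : IntegrableOn v Ω μ)
    (htu : HasTraceAt μ Ω u z τu) (htv : HasTraceAt μ Ω v z τv) :
    HasTraceAt μ Ω (fun x => min (u x) (v x)) z (min τu τv) :=
  htu.of_abs_sub_le hΩ hu hv (fun _ => (abs_min_sub_min_le_max _ _ _ _).trans
    (max_le_add_of_nonneg (abs_nonneg _) (abs_nonneg _))) htv

lemma HasTraceAt.max (hΩ : μ Ω ≠ ⊤) {u v : X → ℝ} {z : X} {τu τv : ℝ}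
    (hu : IntegrableOn u Ω μ) (hv : IntegrableOn v Ω μ)
    (htu : HasTraceAt μ Ω u z τu) (htv : HasTraceAt μ Ω v z τv) :
    HasTraceAt μ Ω (fun x => max (u x) (v x)) z (max τu τv) :=
  htu.of_abs_sub_le hΩ hu hv (fun _ => (abs_max_sub_max_le_max _ _ _ _).trans
    (max_le_add_of_nonneg (abs_nonneg _) (abs_nonneg _))) htv

lemma memK_max (hΩ : μ Ω ≠ ⊤) {ψ₁ ψ₂ ψ₁' ψ₂' : X → EReal} {f g f' g' : X → ℝ}
    {u v : X → ℝ} (hu : memK μ H Ω ψ₁ ψ₂ f g u) (hv : memK μ H Ω ψ₁' ψ₂' f' g' v)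
    (hψ : ψ₂' ≤ ψ₂) (hg : g' ≤ g) (hTV : TV μ (fun x => max (u x) (v x)) Ω < ⊤) :
    memK μ H Ω ψ₁ ψ₂ f g (fun x => max (u x) (v x)) := by
  obtain ⟨hui, -, hu_obs, hu_tr⟩ := hu
  obtain ⟨hvi, -, hv_obs, hv_tr⟩ := hv
  refine ⟨hui.sup hvi, hTV, ?_, ?_⟩
  · filter_upwards [hu_obs, hv_obs] with x hux hvx
    rw [EReal.coe_strictMono.monotone.map_max]
    exact ⟨hux.1.trans (le_max_left _ _), max_le hux.2 (hvx.2.trans (hψ x))⟩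
  · filter_upwards [hu_tr, hv_tr] with z ⟨τu, htu, hfu, hgu⟩ ⟨τv, htv, _, hgv⟩
    exact ⟨max τu τv, htu.max hΩ hui hvi htv, hfu.trans (le_max_left _ _),
      max_le hgu (hgv.trans (hg z))⟩

lemma memK_min (hΩ : μ Ω ≠ ⊤) {ψ₁ ψ₂ ψ₁' ψ₂' : X → EReal} {f g f' g' : X → ℝ}
    {u v : X → ℝ} (hu : memK μ H Ω ψ₁ ψ₂ f g u) (hv : memK μ H Ω ψ₁' ψ₂' f' g' v)
    (hψ : ψ₁' ≤ ψ₁) (hf : f' ≤ f) (hTV : TV μ (fun x => min (u x) (v x)) Ω < ⊤) :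
    memK μ H Ω ψ₁' ψ₂' f' g' (fun x => min (u x) (v x)) := by
  obtain ⟨hui, -, hu_obs, hu_tr⟩ := hu
  obtain ⟨hvi, -, hv_obs, hv_tr⟩ := hv
  refine ⟨hui.inf hvi, hTV, ?_, ?_⟩
  · filter_upwards [hu_obs, hv_obs] with x hux hvx
    rw [EReal.coe_strictMono.monotone.map_min]
    exact ⟨le_min ((hψ x).trans hux.1) hvx.1, (min_le_right _ _).trans hvx.2⟩
  · filter_upwards [hu_tr, hv_tr] with z ⟨τu, htu, hfu, _⟩ ⟨τv, htv, hfv, hgv⟩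
    exact ⟨min τu τv, htu.min hΩ hui hvi htv, le_min ((hf z).trans hfu) hfv,
      (min_le_right _ _).trans hgv⟩

variable [OpensMeasurableSpace X] {As Bs Fs Gs At Bt Ft Gt Es Et : Set X}

theorem IsStrongSolutionSet.inter_of_subset (hΩ : MeasurableSet Ω) (hΩfin : μ Ω ≠ ⊤)
    (hA : At ⊆ As) (hB : Bt ⊆ Bs) (hF : Ft ⊆ Fs) (hG : Gt ⊆ Gs)
    (hEs : IsStrongSolutionSet μ H Ω As Bs Fs Gs Es)
    (hEt : IsStrongSolutionSet μ H Ω At Bt Ft Gt Et) :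
    IsStrongSolutionSet μ H Ω At Bt Ft Gt (Es ∩ Et) := by
  obtain ⟨hmemS, hoptS⟩ := hEs
  obtain ⟨hmemT, hoptT⟩ := hEt
  set χs := Es.indicator fun _ => (1 : ℝ)
  set χt := Et.indicator fun _ => (1 : ℝ)
  have hsub := TV_min_add_TV_max_le hΩ hΩfin hmemS.1 hmemT.1
  have hfin : TV μ χs Ω + TV μ χt Ω < ⊤ := ENNReal.add_lt_top.2 ⟨hmemS.2.1, hmemT.2.1⟩
  have hmax_fin : TV μ (fun x => max (χs x) (χt x)) Ω < ⊤ :=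
    (le_add_self.trans hsub).trans_lt hfin
  have hmax : memKSet μ H Ω As Bs Fs Gs (fun x => max (χs x) (χt x)) :=
    memK_max hΩfin hmemS hmemT (setObstacle_mono hB)
      (indicator_le_indicator_of_subset hG fun _ => zero_le_one) hmax_fin
  have hmin_le : TV μ (fun x => min (χs x) (χt x)) Ω ≤ TV μ χt Ω := by
    refine (ENNReal.add_le_add_iff_right hmax_fin.ne).1 ?_
    calc _ ≤ TV μ χs Ω + TV μ χt Ω := hsub
      _ ≤ TV μ (fun x => max (χs x) (χt x)) Ω + TV μ χt Ω := add_le_add_left (hoptS _ hmax) _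
      _ = _ := add_comm _ _
  rw [IsStrongSolutionSet, indicator_one_inter]
  exact ⟨memK_min hΩfin hmemS hmemT (setObstacle_mono hA)
    (indicator_le_indicator_of_subset hF fun _ => zero_le_one) (hmin_le.trans_lt hmemT.2.1),
    fun w hw => hmin_le.trans (hoptT w hw)⟩

theorem IsMinimalStrongSolutionSet.measure_diff_eq_zero (hΩ : MeasurableSet Ω)
    (hΩfin : μ Ω ≠ ⊤) (hA : At ⊆ As) (hB : Bt ⊆ Bs) (hF : Ft ⊆ Fs) (hG : Gt ⊆ Gs)
    (hEs : IsStrongSolutionSet μ H Ω As Bs Fs Gs Es)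
    (hEt : IsMinimalStrongSolutionSet μ H Ω At Bt Ft Gt Et) :
    μ (Et \ Es) = 0 := by
  simpa only [sdiff_inter_self_eq_sdiff] using
    hEt.2 _ (hEs.inter_of_subset hΩ hΩfin hA hB hF hG hEt.1)

end ObstacleProblem

lemma IsDoubling.measure_ball_ne_top {X : Type*} [MetricSpace X] [MeasurableSpace X]
    {μ : Measure X} (hμ : IsDoubling μ) (x : X) (r : ℝ) : μ (Metric.ball x r) ≠ ⊤ := by
  rcases le_or_gt r 0 with hr | hr
  · simp [Metric.ball_eq_empty.2 hr]
  · obtain ⟨C, hC, hball⟩ := hμ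
    exact ((le_mul_of_one_le_left zero_le hC).trans_lt (hball x r hr).2.2).ne

lemma IsDoubling.measure_ne_top_of_isBounded {X : Type*} [MetricSpace X] [MeasurableSpace X]
    {μ : Measure X} (hμ : IsDoubling μ) {s : Set X} (hs : Bornology.IsBounded s) : μ s ≠ ⊤ := by
  rcases s.eq_empty_or_nonempty with rfl | ⟨x, -⟩
  · simp
  · obtain ⟨r, hr⟩ := hs.subset_ball x
    exact measure_ne_top_of_subset hr (hμ.measure_ball_ne_top x r)

theorem minimal_strong_solution_sets_nested_general {X : Type*} [MetricSpace X] [MeasurableSpace X]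
    [BorelSpace X] (μ H : Measure X)
    (hμ : IsDoubling μ)
    (Ω : Set X) (hΩo : IsOpen Ω) (hΩb : Bornology.IsBounded Ω)
    (As Bs Fs Gs At Bt Ft Gt : Set X)
    -- the data are superlevel sets, hence nested
    (hAst : At ⊆ As) (hBst : Bt ⊆ Bs) (hFst : Ft ⊆ Fs) (hGst : Gt ⊆ Gs)
    (Es Et : Set X)
    (hEs : IsMinimalStrongSolutionSet μ H Ω As Bs Fs Gs Es)
    (hEt : IsMinimalStrongSolutionSet μ H Ω At Bt Ft Gt Et) :
    μ (Et \ Es) = 0 :=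
  hEt.measure_diff_eq_zero hΩo.measurableSet (hμ.measure_ne_top_of_isBounded hΩb)
    hAst hBst hFst hGst hEs.1

/-- minimal strong solution sets for nested (superlevel) data are nested:
if `s < t` then `μ(E_t \ E_s) = 0`. -/
theorem minimal_strong_solution_sets_nested {X : Type*} [MetricSpace X] [MeasurableSpace X]
    [BorelSpace X] [CompleteSpace X] (μ H : Measure X)
    (hμ : IsDoubling μ)
    (hH : ∀ s : Set X, H s = codimOneHausdorff μ s)
    (Ω : Set X) (hΩo : IsOpen Ω) (hΩc : IsConnected Ω) (hΩb : Bornology.IsBounded Ω)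
    (hΩm : μ Ωᶜ ≠ 0)
    (hHfin : H (frontier Ω) < ⊤)
    (hHdbl : BoundaryDoubling H Ω)
    (hAR : LowerCodimOneAR μ H Ω)
    (hpts : ∀ z ∈ frontier Ω, H {z} = 0)
    (hunif : ∃ A : ℝ, IsUniformDomain Ω A)
    (hpmc : PosMeanCurvature μ Ω)
    (s t : ℝ) (hst : s < t)
    (As Bs Fs Gs At Bt Ft Gt : Set X)
    -- admissibility of the level-`s` data
    (hAs : ∃ U, IsOpen U ∧ As = U ∩ closure Ω) (hBs : ∃ U, IsOpen U ∧ Bs = U ∩ closure Ω)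
    (hFs : IsOpen Fs) (hGs : IsOpen Gs) (hFGs : Fs ⊆ Gs)
    (hPFs : perim μ Fs Set.univ < ⊤) (hPGs : perim μ Gs Set.univ < ⊤)
    (hbds : H (frontier Ω ∩ ((closure As ∩ closure (closure Ω \ As)) ∪ frontier Fs ∪ frontier Gs)) = 0)
    (htrs : ∀ᵐ z ∂H.restrict (frontier Ω), (z ∈ Fs → z ∈ Bs) ∧ (z ∈ As → z ∈ Gs))
    -- admissibility of the level-`t` data
    (hAt : ∃ U, IsOpen U ∧ At = U ∩ closure Ω) (hBt : ∃ U, IsOpen U ∧ Bt = U ∩ closure Ω)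
    (hFt : IsOpen Ft) (hGt : IsOpen Gt) (hFGt : Ft ⊆ Gt)
    (hPFt : perim μ Ft Set.univ < ⊤) (hPGt : perim μ Gt Set.univ < ⊤)
    (hbdt : H (frontier Ω ∩ ((closure At ∩ closure (closure Ω \ At)) ∪ frontier Ft ∪ frontier Gt)) = 0)
    (htrt : ∀ᵐ z ∂H.restrict (frontier Ω), (z ∈ Ft → z ∈ Bt) ∧ (z ∈ At → z ∈ Gt))
    -- the data are superlevel sets, hence nested
    (hAst : At ⊆ As) (hBst : Bt ⊆ Bs) (hFst : Ft ⊆ Fs) (hGst : Gt ⊆ Gs)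
    (Es Et : Set X)
    (hEs : IsMinimalStrongSolutionSet μ H Ω As Bs Fs Gs Es)
    (hEt : IsMinimalStrongSolutionSet μ H Ω At Bt Ft Gt Et) :
    μ (Et \ Es) = 0 :=
  minimal_strong_solution_sets_nested_general μ H hμ Ω hΩo hΩb As Bs Fs Gs At Bt Ft Gt hAst hBst
    hFst hGst Es Et hEs hEt
end
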